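/- arXiv:1308.2941 — 3 statements merged into one kernel-verified Lean document; each statement's English description precedes it below -/
import Mathlib

section
/- Let F be a finite partition of unity of C([0,1]) by positive functions, each with support of diameter at most ε, such that F splits as F₀ ⊔ F₁ where within each Fₖ the functions have pairwise disjoint closed supports. Then for each k = 0,1 there exists a continuous function hₖ ∈ C₀((0,1])₊ with ‖hₖ - id‖ ≤ ε such that hₖ is constant on the support of each f ∈ Fₖ. -/
open unitInterval

/-- The identity function `t ↦ t` as a continuous real-valued map on `[0,1]`. -/
noncomputable def idI : C(unitInterval, ℝ) := ⟨fun x => (x : ℝ), continuous_subtype_val⟩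

lemma key_flat (ε : ℝ) (hε : 0 < ε) (F : Finset C(unitInterval, ℝ))
    (hdiam : ∀ f ∈ F, Metric.diam (tsupport ⇑f) ≤ ε)
    (hsupp : ∀ f ∈ F, ∀ g ∈ F, f ≠ g → Disjoint (tsupport ⇑f) (tsupport ⇑g)) :
    ∃ h : C(unitInterval, ℝ), h 0 = 0 ∧ (0 : C(unitInterval, ℝ)) ≤ h ∧ ‖h - idI‖ ≤ ε ∧
      ∀ f ∈ F, ∀ x ∈ tsupport ⇑f, ∀ y ∈ tsupport ⇑f, h x = h y := by
  classical
  set c : C(unitInterval, ℝ) → ℝ := fun f => sInf (Subtype.val '' tsupport ⇑f) with hcdef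
  set Z : C(unitInterval, ℝ) → Set unitInterval := fun f =>
    (⋃ g ∈ F.erase f, tsupport ⇑g) ∪
      (if (0 : unitInterval) ∈ tsupport ⇑f then (∅ : Set unitInterval) else {0}) with hZdef
  have hZclosed : ∀ f, IsClosed (Z f) := by
    intro f
    apply IsClosed.union
    · exact Set.Finite.isClosed_biUnion (Finset.finite_toSet _) fun g _ => isClosed_tsupport _
    · split <;> simp [isClosed_singleton]
  have hZdisj : ∀ f ∈ F, Disjoint (Z f) (tsupport ⇑f) := by
    intro f hf
    apply Disjoint.union_left
    · rw [Set.disjoint_iUnion_left]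
      intro g
      rw [Set.disjoint_iUnion_left]
      intro hg
      exact (hsupp g (Finset.mem_of_mem_erase hg) f hf (Finset.ne_of_mem_erase hg))
    · split
      · exact Set.empty_disjoint _
      · rename_i h0
        exact Set.disjoint_singleton_left.mpr h0
  -- Urysohn functions
  have hex : ∀ f : C(unitInterval, ℝ), ∃ χ : C(unitInterval, ℝ), f ∈ F →
      (Set.EqOn ⇑χ 0 (Z f) ∧ Set.EqOn ⇑χ 1 (tsupport ⇑f) ∧ ∀ x, χ x ∈ Set.Icc (0:ℝ) 1) := by
    intro f
    by_cases hf : f ∈ F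
    · obtain ⟨χ, h1, h2, h3⟩ :=
        exists_continuous_zero_one_of_isClosed (hZclosed f) (isClosed_tsupport ⇑f) (hZdisj f hf)
      exact ⟨χ, fun _ => ⟨h1, h2, h3⟩⟩
    · exact ⟨0, fun hf' => absurd hf' hf⟩
  choose χ hχ using hex
  set G : C(unitInterval, ℝ) := ∑ f ∈ F, c f • χ f with hGdef
  -- bounds on c f
  have hc_nonneg : ∀ f : C(unitInterval, ℝ), 0 ≤ c f := by
    intro f
    rcases Set.eq_empty_or_nonempty (tsupport ⇑f) with he | he
    · simp [hcdef, he, Real.sInf_empty]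
    · apply le_csInf (he.image _)
      rintro b ⟨y, _, rfl⟩
      exact y.2.1
  have hbdd : ∀ f : C(unitInterval, ℝ), BddBelow (Subtype.val '' tsupport ⇑f) := by
    intro f
    refine ⟨(0 : ℝ), ?_⟩
    rintro b ⟨y, _, rfl⟩
    exact y.2.1
  have hc_le : ∀ f : C(unitInterval, ℝ), ∀ x ∈ tsupport ⇑f, c f ≤ (x : ℝ) := by
    intro f x hx
    exact csInf_le (hbdd f) ⟨x, hx, rfl⟩
  have hc_ge : ∀ f ∈ F, ∀ x ∈ tsupport ⇑f, (x : ℝ) - ε ≤ c f := by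
    intro f hf x hx
    refine le_csInf ⟨(x : ℝ), ⟨x, hx, rfl⟩⟩ ?_
    rintro b ⟨y, hy, rfl⟩
    have hb : Bornology.IsBounded (tsupport ⇑f) := (isClosed_tsupport ⇑f).isCompact.isBounded
    have hd : dist x y ≤ ε := (Metric.dist_le_diam_of_mem hb hx hy).trans (hdiam f hf)
    rw [Subtype.dist_eq, Real.dist_eq] at hd
    have := abs_le.mp hd
    linarith [this.1, this.2]
  -- G is constant c f on tsupport f
  have hGconst : ∀ f ∈ F, ∀ x ∈ tsupport ⇑f, G x = c f := by
    intro f hf x hx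
    have : G x = ∑ g ∈ F, c g * χ g x := by
      simp [hGdef, ContinuousMap.sum_apply]
    rw [this, Finset.sum_eq_single f]
    · rw [(hχ f hf).2.1 hx]; simp
    · intro g hg hne
      have hxZ : x ∈ Z g := by
        apply Set.mem_union_left
        exact Set.mem_biUnion (Finset.mem_erase.mpr ⟨hne.symm, hf⟩) hx
      rw [(hχ g hg).1 hxZ]; simp
    · intro h; exact absurd hf h
  have hG0 : G 0 = 0 := by
    have : G 0 = ∑ g ∈ F, c g * χ g 0 := by
      simp [hGdef, ContinuousMap.sum_apply]
    rw [this]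
    apply Finset.sum_eq_zero
    intro f hf
    by_cases h0 : (0 : unitInterval) ∈ tsupport ⇑f
    · have h1 : c f ≤ 0 := by
        have := hc_le f 0 h0
        simpa using this
      have : c f = 0 := le_antisymm h1 (hc_nonneg f)
      simp [this]
    · have hxZ : (0 : unitInterval) ∈ Z f := by
        apply Set.mem_union_right
        simp [hZdef, h0]
      rw [(hχ f hf).1 hxZ]; simp
  -- the function h
  set h : C(unitInterval, ℝ) :=
    ⟨fun x => max (max 0 ((x : ℝ) - ε)) (min ((x : ℝ) + ε) (G x)),
      ((continuous_const.max (continuous_subtype_val.sub continuous_const)).max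
        ((continuous_subtype_val.add continuous_const).min G.continuous))⟩ with hhdef
  have happ : ∀ x : unitInterval, h x = max (max 0 ((x : ℝ) - ε)) (min ((x : ℝ) + ε) (G x)) :=
    fun x => rfl
  refine ⟨h, ?_, ?_, ?_, ?_⟩
  · rw [happ]
    have e0 : ((0 : unitInterval) : ℝ) = 0 := rfl
    rw [e0, hG0]
    have h1 : min ((0:ℝ) + ε) (0:ℝ) = 0 := min_eq_right (by linarith)
    have h2 : max (0:ℝ) ((0:ℝ) - ε) = 0 := max_eq_left (by linarith)
    rw [h1, h2, max_self]
  · rw [ContinuousMap.le_def]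
    intro x
    rw [ContinuousMap.zero_apply, happ]
    exact le_trans (le_max_left 0 _) (le_max_left _ _)
  · rw [ContinuousMap.norm_le _ hε.le]
    intro x
    have hx0 : (0:ℝ) ≤ x := x.2.1
    simp only [ContinuousMap.sub_apply]
    have hidI : idI x = (x : ℝ) := rfl
    rw [hidI, happ, Real.norm_eq_abs, abs_le]
    constructor
    · have : (x:ℝ) - ε ≤ max (0:ℝ) ((x:ℝ) - ε) := le_max_right _ _
      have h2 : max (0:ℝ) ((x:ℝ) - ε) ≤ max (max 0 ((x : ℝ) - ε)) (min ((x : ℝ) + ε) (G x)) :=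
        le_max_left _ _
      linarith
    · have h1 : max (0:ℝ) ((x:ℝ) - ε) ≤ (x:ℝ) + ε := max_le (by linarith) (by linarith)
      have h2 : min ((x : ℝ) + ε) (G x) ≤ (x:ℝ) + ε := min_le_left _ _
      have := max_le h1 h2
      linarith
  · intro f hf x hx y hy
    have key : ∀ z ∈ tsupport ⇑f, h z = c f := by
      intro z hz
      rw [happ, hGconst f hf z hz]
      have h1 : c f ≤ (z:ℝ) := hc_le f z hz
      have h2 : (z:ℝ) - ε ≤ c f := hc_ge f hf z hz
      rw [min_eq_right (by linarith), max_eq_right (max_le (hc_nonneg f) (by linarith))]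
    rw [key x hx, key y hy]

/-- Given a finite partition of unity `F₀ ⊔ F₁` of `C([0,1])` by positive functions whose
supports have diameter at most `ε`, and such that within each `Fₖ` the (closed) supports are
pairwise disjoint, for each `k = 0,1` there is `hₖ ∈ C₀((0,1])₊` with `‖hₖ - id‖ ≤ ε` which is
constant on the support of each `f ∈ Fₖ`. -/
theorem stmt2 (ε : ℝ) (hε : 0 < ε) (F₀ F₁ : Finset C(unitInterval, ℝ))
    (hdisj : Disjoint F₀ F₁)
    (hpos : ∀ f ∈ F₀.disjUnion F₁ hdisj, (0 : C(unitInterval, ℝ)) ≤ f)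
    (hsum : ∑ f ∈ F₀.disjUnion F₁ hdisj, f = 1)
    (hdiam : ∀ f ∈ F₀.disjUnion F₁ hdisj, Metric.diam (tsupport ⇑f) ≤ ε)
    (hsupp₀ : ∀ f ∈ F₀, ∀ g ∈ F₀, f ≠ g → Disjoint (tsupport ⇑f) (tsupport ⇑g))
    (hsupp₁ : ∀ f ∈ F₁, ∀ g ∈ F₁, f ≠ g → Disjoint (tsupport ⇑f) (tsupport ⇑g)) :
    (∃ h : C(unitInterval, ℝ), h 0 = 0 ∧ (0 : C(unitInterval, ℝ)) ≤ h ∧ ‖h - idI‖ ≤ ε ∧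
      ∀ f ∈ F₀, ∀ x ∈ tsupport ⇑f, ∀ y ∈ tsupport ⇑f, h x = h y) ∧
    (∃ h : C(unitInterval, ℝ), h 0 = 0 ∧ (0 : C(unitInterval, ℝ)) ≤ h ∧ ‖h - idI‖ ≤ ε ∧
      ∀ f ∈ F₁, ∀ x ∈ tsupport ⇑f, ∀ y ∈ tsupport ⇑f, h x = h y) := by
  constructor
  · exact key_flat ε hε F₀
      (fun f hf => hdiam f (Finset.mem_disjUnion.mpr (Or.inl hf))) hsupp₀
  · exact key_flat ε hε F₁
      (fun f hf => hdiam f (Finset.mem_disjUnion.mpr (Or.inr hf))) hsupp₁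
end

section
/- For every ε > 0 and continuous function g on [0,1], there exists δ > 0 such that: for any C*-algebra A, any positive contraction b ∈ A, and any contraction a ∈ A with ‖ab - ba‖ < δ, one has ‖a·g(b) - g(b)·a‖ < ε. -/
universe u

lemma comm_pow_bound {A : Type*} [NormedRing A] (a b : A) (hb : ‖b‖ ≤ 1) :
    ∀ n : ℕ, ‖a * b ^ n - b ^ n * a‖ ≤ n * ‖a * b - b * a‖ := by
  intro n
  induction n with
  | zero => simp
  | succ n ih =>
    have key : a * b ^ (n + 1) - b ^ (n + 1) * a
        = (a * b ^ n - b ^ n * a) * b + b ^ n * (a * b - b * a) := by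
      rw [pow_succ]; noncomm_ring
    have h2 : ‖b ^ n * (a * b - b * a)‖ ≤ ‖a * b - b * a‖ := by
      cases n with
      | zero => simp
      | succ m =>
        refine (norm_mul_le _ _).trans ?_
        have : ‖b ^ (m + 1)‖ ≤ 1 :=
          (norm_pow_le' b m.succ_pos).trans (pow_le_one₀ (norm_nonneg b) hb)
        calc ‖b ^ (m + 1)‖ * ‖a * b - b * a‖ ≤ 1 * ‖a * b - b * a‖ := by gcongr
          _ = _ := one_mul _
    calc ‖a * b ^ (n + 1) - b ^ (n + 1) * a‖
        ≤ ‖(a * b ^ n - b ^ n * a) * b‖ + ‖b ^ n * (a * b - b * a)‖ := by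
          rw [key]; exact norm_add_le _ _
      _ ≤ ‖a * b ^ n - b ^ n * a‖ * ‖b‖ + ‖a * b - b * a‖ := by
          gcongr; exact norm_mul_le _ _
      _ ≤ (n * ‖a * b - b * a‖) * 1 + ‖a * b - b * a‖ := by
          gcongr
      _ = (n + 1 : ℕ) * ‖a * b - b * a‖ := by push_cast; ring

/-- Uniform commutator estimate for continuous functional calculus: for every `ε > 0` and
continuous `g` on `[0,1]` there is `δ > 0` such that in ANY C*-algebra `A`, for any positive
contraction `b` and any contraction `a` with `‖ab - ba‖ < δ`, one has
`‖a·g(b) - g(b)·a‖ < ε`. -/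
theorem stmt3 (ε : ℝ) (hε : 0 < ε) (g : ℝ → ℝ) (hg : ContinuousOn g (Set.Icc 0 1)) :
    ∃ δ > 0, ∀ (A : Type u) [CStarAlgebra A] [PartialOrder A] [StarOrderedRing A]
      (a b : A), 0 ≤ b → ‖b‖ ≤ 1 → ‖a‖ ≤ 1 → ‖a * b - b * a‖ < δ →
      ‖a * cfc g b - cfc g b * a‖ < ε := by
  obtain ⟨p, hp⟩ := exists_polynomial_near_of_continuousOn 0 1 g hg (ε / 4) (by positivity)
  set S : ℝ := ∑ i ∈ Finset.range (p.natDegree + 1), |p.coeff i| * i with hS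
  have hS0 : 0 ≤ S := Finset.sum_nonneg fun i _ => by positivity
  refine ⟨ε / (2 * (S + 1)), by positivity, ?_⟩
  intro A _ _ _ a b hb0 hb1 ha1 hcomm
  cases subsingleton_or_nontrivial A with
  | inl h =>
    have : a * cfc g b - cfc g b * a = 0 := Subsingleton.elim _ _
    rw [this, norm_zero]; exact hε
  | inr h =>
  have hsb : IsSelfAdjoint b := hb0.isSelfAdjoint
  have hspec : spectrum ℝ b ⊆ Set.Icc 0 1 := by
    intro x hx
    have h1 : 0 ≤ x := spectrum_nonneg_of_nonneg hb0 hx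
    have h2 : ‖x‖ ≤ ‖b‖ := spectrum.norm_le_norm_of_mem hx
    rw [Real.norm_of_nonneg h1] at h2
    exact ⟨h1, h2.trans hb1⟩
  have hgs : ContinuousOn g (spectrum ℝ b) := hg.mono hspec
  -- decompose cfc g b = aeval b p + E
  set P : A := Polynomial.aeval b p with hP
  set E : A := cfc (fun x => g x - p.eval x) b with hE
  have hdecomp : cfc g b = P + E := by
    have h1 : cfc (fun x => g x - p.eval x) b
        = cfc g b - cfc (fun x : ℝ => p.eval x) b :=
      cfc_sub _ _ b (hgs) (Polynomial.continuous_aeval p |>.continuousOn)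
    have h2 : cfc (fun x : ℝ => p.eval x) b = P := cfc_polynomial p b
    rw [hE, h1, h2]; abel
  have hEnorm : ‖E‖ ≤ ε / 4 := by
    refine norm_cfc_le (by positivity) fun x hx => ?_
    have := hp x (hspec hx)
    rw [Real.norm_eq_abs, abs_sub_comm]
    exact this.le
  -- commutator with P
  have hPcomm : ‖a * P - P * a‖ ≤ S * ‖a * b - b * a‖ := by
    have haeval : P = ∑ i ∈ Finset.range (p.natDegree + 1), p.coeff i • b ^ i := by
      rw [hP, Polynomial.aeval_eq_sum_range]
    have hsum : a * P - P * a
        = ∑ i ∈ Finset.range (p.natDegree + 1), p.coeff i • (a * b ^ i - b ^ i * a) := by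
      rw [haeval, Finset.mul_sum, Finset.sum_mul, ← Finset.sum_sub_distrib]
      congr 1; ext i
      rw [smul_sub, mul_smul_comm, smul_mul_assoc]
    rw [hsum, hS]
    refine (norm_sum_le _ _).trans ?_
    rw [Finset.sum_mul]
    refine Finset.sum_le_sum fun i _ => ?_
    rw [norm_smul, Real.norm_eq_abs, mul_assoc]
    exact mul_le_mul_of_nonneg_left (comm_pow_bound a b hb1 i) (abs_nonneg _)
  -- assemble
  have hkey : a * cfc g b - cfc g b * a = (a * P - P * a) + (a * E - E * a) := by
    rw [hdecomp]; noncomm_ring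
  have hE2 : ‖a * E - E * a‖ ≤ 2 * ‖E‖ := by
    refine (norm_sub_le _ _).trans ?_
    have h1 : ‖a * E‖ ≤ ‖E‖ := (norm_mul_le _ _).trans (by
      calc ‖a‖ * ‖E‖ ≤ 1 * ‖E‖ := by gcongr
        _ = ‖E‖ := one_mul _)
    have h2 : ‖E * a‖ ≤ ‖E‖ := (norm_mul_le _ _).trans (by
      calc ‖E‖ * ‖a‖ ≤ ‖E‖ * 1 := by gcongr
        _ = ‖E‖ := mul_one _)
    linarith
  have hmain : ‖a * P - P * a‖ < ε / 2 := by
    have : S * ‖a * b - b * a‖ ≤ S * (ε / (2 * (S + 1))) :=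
      mul_le_mul_of_nonneg_left hcomm.le hS0
    have hlt : S * (ε / (2 * (S + 1))) < ε / 2 := by
      have heq : (S + 1) * (ε / (2 * (S + 1))) = ε / 2 := by
        field_simp
      calc S * (ε / (2 * (S + 1))) < (S + 1) * (ε / (2 * (S + 1))) :=
            mul_lt_mul_of_pos_right (lt_add_one S) (by positivity)
        _ = ε / 2 := heq
    linarith [hPcomm]
  calc ‖a * cfc g b - cfc g b * a‖ ≤ ‖a * P - P * a‖ + ‖a * E - E * a‖ := by
        rw [hkey]; exact norm_add_le _ _
    _ < ε / 2 + 2 * (ε / 4) := by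
        have := hE2.trans (by linarith : 2 * ‖E‖ ≤ 2 * (ε/4))
        linarith
    _ = ε := by ring
end

section
/- Let A be a C*-algebra whose primitive ideal space has a basis of compact open sets. Then for each ε > 0, the set of c ∈ A₊ such that Ideal((c-ε)₊) is a compact element of the ideal lattice of A is dense in A₊. -/
universe u
set_option linter.unusedSectionVars false

variable {A : Type u} [CStarAlgebra A] [PartialOrder A] [StarOrderedRing A]

/-- `(a - ε)₊` via functional calculus. -/
noncomputable def posCut (ε : ℝ) (a : A) : A :=
  cfcₙ (fun t : ℝ => max (t - ε) 0) a

/-- A subset `S` of `A` is a compact element of the lattice of closed two-sided ideals if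
whenever `S` is contained in the closure of the union of an upward directed family of
closed two-sided ideals, it is contained in one of them. -/
def IsCptIdeal (S : Set A) : Prop :=
  ∀ (ι : Type u) (J : ι → TwoSidedIdeal A), Nonempty ι →
    (∀ i, IsClosed ((J i : Set A))) → Directed (· ≤ ·) J →
    S ⊆ closure (⋃ i, (J i : Set A)) → ∃ i, S ⊆ (J i : Set A)

/-- The closed two-sided ideal of `A` generated by `x`. -/
def genIdeal (x : A) : Set A := closure ((TwoSidedIdeal.span {x} : TwoSidedIdeal A) : Set A)

section Aux

open Polynomial Pointwise

/-- The closure of (the carrier of) a two-sided ideal, as a two-sided ideal. -/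
def TwoSidedIdeal.clo (J : TwoSidedIdeal A) : TwoSidedIdeal A :=
  TwoSidedIdeal.mk' (closure (J : Set A))
    (subset_closure J.zero_mem)
    (fun hx hy => map_mem_closure₂ continuous_add hx hy fun _ ha _ hb => J.add_mem ha hb)
    (fun hx => map_mem_closure continuous_neg hx fun _ ha => J.neg_mem ha)
    (fun {x y} hy => map_mem_closure (f := (x * ·)) (continuous_mul_left x) hy
      fun _ ha => J.mul_mem_left _ _ ha)
    (fun {x y} hx => map_mem_closure (f := (· * y)) (continuous_mul_right y) hx
      fun _ ha => J.mul_mem_right _ _ ha)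

@[simp]
lemma TwoSidedIdeal.coe_clo (J : TwoSidedIdeal A) : (J.clo : Set A) = closure (J : Set A) :=
  TwoSidedIdeal.coe_mk' _ _ _ _ _ _

/-- `genIdeal` as a `TwoSidedIdeal`. -/
noncomputable def genIdeal' (x : A) : TwoSidedIdeal A := (TwoSidedIdeal.span {x}).clo

@[simp]
lemma coe_genIdeal' (x : A) : (genIdeal' x : Set A) = genIdeal x := TwoSidedIdeal.coe_clo _

lemma isClosed_genIdeal (x : A) : IsClosed (genIdeal x) := isClosed_closure

lemma self_mem_genIdeal (x : A) : x ∈ genIdeal x :=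
  subset_closure (TwoSidedIdeal.subset_span rfl)

lemma mem_genIdeal'_iff {x y : A} : y ∈ genIdeal' x ↔ y ∈ genIdeal x := by
  rw [← SetLike.mem_coe, coe_genIdeal']

lemma genIdeal_subset {x : A} {J : TwoSidedIdeal A} (hJc : IsClosed (J : Set A))
    (hx : x ∈ J) : genIdeal x ⊆ (J : Set A) :=
  closure_minimal (fun y hy => TwoSidedIdeal.mem_span_iff.mp hy J (by simpa using hx)) hJc

lemma genIdeal_mono {p x : A} (hp : p ∈ genIdeal x) : genIdeal p ⊆ genIdeal x := by
  have h := genIdeal_subset (J := genIdeal' x)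
    (by rw [coe_genIdeal']; exact isClosed_genIdeal x) (mem_genIdeal'_iff.mpr hp)
  rwa [coe_genIdeal'] at h

lemma mul_mem_genIdeal_left {x : A} (a : A) {u : A} (hu : u ∈ genIdeal x) :
    a * u ∈ genIdeal x :=
  mem_genIdeal'_iff.mp <| (genIdeal' x).mul_mem_left _ _ (mem_genIdeal'_iff.mpr hu)

lemma mul_mem_genIdeal_right {x : A} (a : A) {u : A} (hu : u ∈ genIdeal x) :
    u * a ∈ genIdeal x :=
  mem_genIdeal'_iff.mp <| (genIdeal' x).mul_mem_right _ _ (mem_genIdeal'_iff.mpr hu)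

lemma add_mem_genIdeal {x u v : A} (hu : u ∈ genIdeal x) (hv : v ∈ genIdeal x) :
    u + v ∈ genIdeal x :=
  mem_genIdeal'_iff.mp <| (genIdeal' x).add_mem (mem_genIdeal'_iff.mpr hu)
    (mem_genIdeal'_iff.mpr hv)


section Approx

noncomputable def gfun (n : ℕ) (t : ℝ) : ℝ := ((n : ℝ)+1) / (1 + ((n : ℝ)+1) * |t|)
noncomputable def efun (n : ℕ) (t : ℝ) : ℝ := t * gfun n t

lemma gfun_continuous (n : ℕ) : Continuous (gfun n) := by
  apply Continuous.div (by fun_prop) (by fun_prop)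
  intro t; positivity

lemma efun_continuous (n : ℕ) : Continuous (efun n) := by
  unfold efun; exact continuous_id.mul (gfun_continuous n)

lemma efun_zero (n : ℕ) : efun n 0 = 0 := by simp [efun]

lemma one_sub_efun {n : ℕ} {t : ℝ} (ht : 0 ≤ t) :
    1 - efun n t = 1 / (1 + ((n : ℝ)+1) * t) := by
  unfold efun gfun
  rw [abs_of_nonneg ht]
  have h : (0:ℝ) < 1 + ((n : ℝ)+1) * t := by positivity
  field_simp
  ring

lemma one_sub_efun_mem {n : ℕ} {t : ℝ} (ht : 0 ≤ t) :
    0 ≤ 1 - efun n t ∧ 1 - efun n t ≤ 1 := by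
  rw [one_sub_efun ht]
  have h : (0:ℝ) < 1 + ((n : ℝ)+1) * t := by positivity
  constructor
  · positivity
  · rw [div_le_one h]; nlinarith [Nat.cast_nonneg (α := ℝ) n]

lemma efun_calc {n : ℕ} {t : ℝ} (ht : 0 ≤ t) :
    0 ≤ (1 - efun n t) * t * (1 - efun n t) ∧
      (1 - efun n t) * t * (1 - efun n t) ≤ 1 / ((n : ℝ)+1) := by
  have h : (0:ℝ) < 1 + ((n : ℝ)+1) * t := by positivity
  have hn : (0:ℝ) < (n : ℝ) + 1 := by positivity
  rw [one_sub_efun ht]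
  constructor
  · positivity
  · have key : 1 / (1 + ((n : ℝ)+1) * t) * t * (1 / (1 + ((n : ℝ)+1) * t))
        = t / ((1 + ((n : ℝ)+1) * t) * (1 + ((n : ℝ)+1) * t)) := by field_simp
    rw [key, div_le_div_iff₀ (by positivity) hn]
    nlinarith [Nat.cast_nonneg (α := ℝ) n, mul_nonneg ht ht]

end Approx

section CStarApprox

variable [Nontrivial A]

lemma spectrum_subset_Icc {v : A} (hv : 0 ≤ v) : spectrum ℝ v ⊆ Set.Icc 0 ‖v‖ := by
  intro t ht
  have h0 : 0 ≤ t := spectrum_nonneg_of_nonneg hv ht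
  exact ⟨h0, by simpa [abs_of_nonneg h0] using spectrum.norm_le_norm_of_mem ht⟩

lemma cfc_efun_sa {v : A} (n : ℕ) : IsSelfAdjoint (cfc (efun n) v) := cfc_predicate _ v

lemma conj_efun_le {v : A} (hv : 0 ≤ v) (n : ℕ) :
    ‖(1 - cfc (efun n) v) * v * (1 - cfc (efun n) v)‖ ≤ 1 / ((n : ℝ)+1) := by
  have hsa : IsSelfAdjoint v := .of_nonneg hv
  have hc1 : Continuous fun t : ℝ => 1 - efun n t := continuous_const.sub (efun_continuous n)
  have hc2 : Continuous fun t : ℝ => (1 - efun n t) * t := hc1.mul continuous_id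
  have h2 : cfc (fun t : ℝ => (1 - efun n t) * t * (1 - efun n t)) v
      = (1 - cfc (efun n) v) * v * (1 - cfc (efun n) v) := by
    rw [cfc_mul _ _ v hc2.continuousOn hc1.continuousOn,
      cfc_mul _ _ v hc1.continuousOn (by fun_prop),
      cfc_sub _ _ v (by fun_prop) (efun_continuous n).continuousOn,
      cfc_const 1 v, map_one, cfc_id' ℝ v]
  rw [← h2]
  apply norm_cfc_le (by positivity)
  intro t ht
  obtain ⟨h0, _⟩ := spectrum_subset_Icc hv ht
  obtain ⟨hge, hle⟩ := efun_calc (n := n) h0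
  rw [Real.norm_eq_abs, abs_of_nonneg hge]
  exact hle

lemma cfc_efun_mem {v : A} (hv : 0 ≤ v) (n : ℕ) : cfc (efun n) v ∈ genIdeal v := by
  have h : cfc (efun n) v = v * cfc (gfun n) v := by
    unfold efun
    rw [cfc_mul _ _ v (by fun_prop) (gfun_continuous n).continuousOn, cfc_id' ℝ v]
  rw [h]
  exact mul_mem_genIdeal_right _ (self_mem_genIdeal v)

lemma approx_conj {v : A} (hv : 0 ≤ v) {z : A} (hz : z * star z ≤ v) (n : ℕ) :
    ‖z - cfc (efun n) v * z‖ ^ 2 ≤ 1 / ((n : ℝ)+1) := by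
  set e := cfc (efun n) v with he
  have hesa : IsSelfAdjoint e := cfc_predicate _ v
  have hesa1 : IsSelfAdjoint (1 - e) := (IsSelfAdjoint.one A).sub hesa
  have h1 : z - e * z = (1 - e) * z := by noncomm_ring
  have h2 : ((1 - e) * z) * star ((1 - e) * z) = (1 - e) * (z * star z) * (1 - e) := by
    rw [star_mul, hesa1.star_eq]; noncomm_ring
  have h3 : (1 - e) * (z * star z) * (1 - e) ≤ (1 - e) * v * (1 - e) := by
    have := star_left_conjugate_le_conjugate hz (1 - e)
    rwa [hesa1.star_eq] at this
  have h4 : 0 ≤ (1 - e) * (z * star z) * (1 - e) := by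
    have := star_left_conjugate_nonneg (mul_star_self_nonneg z) (1 - e)
    rwa [hesa1.star_eq] at this
  calc ‖z - e * z‖ ^ 2 = ‖((1 - e) * z) * star ((1 - e) * z)‖ := by
        rw [h1, sq, ← CStarRing.norm_self_mul_star]
    _ = ‖(1 - e) * (z * star z) * (1 - e)‖ := by rw [h2]
    _ ≤ ‖(1 - e) * v * (1 - e)‖ := CStarAlgebra.norm_le_norm_of_nonneg_of_le h4 h3
    _ ≤ 1 / ((n : ℝ)+1) := conj_efun_le hv n

lemma approx_conj' {v : A} (hv : 0 ≤ v) {z : A} (hz : star z * z ≤ v) (n : ℕ) :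
    ‖z - z * cfc (efun n) v‖ ^ 2 ≤ 1 / ((n : ℝ)+1) := by
  set e := cfc (efun n) v with he
  have hesa : IsSelfAdjoint e := cfc_predicate _ v
  have hesa1 : IsSelfAdjoint (1 - e) := (IsSelfAdjoint.one A).sub hesa
  have h1 : z - z * e = z * (1 - e) := by noncomm_ring
  have h2 : star (z * (1 - e)) * (z * (1 - e)) = (1 - e) * (star z * z) * (1 - e) := by
    rw [star_mul, hesa1.star_eq]; noncomm_ring
  have h3 : (1 - e) * (star z * z) * (1 - e) ≤ (1 - e) * v * (1 - e) := by
    have := star_left_conjugate_le_conjugate hz (1 - e)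
    rwa [hesa1.star_eq] at this
  have h4 : 0 ≤ (1 - e) * (star z * z) * (1 - e) := by
    have := star_left_conjugate_nonneg (star_mul_self_nonneg z) (1 - e)
    rwa [hesa1.star_eq] at this
  calc ‖z - z * e‖ ^ 2 = ‖star (z * (1 - e)) * (z * (1 - e))‖ := by
        rw [h1, sq, ← CStarRing.norm_star_mul_self]
    _ = ‖(1 - e) * (star z * z) * (1 - e)‖ := by rw [h2]
    _ ≤ ‖(1 - e) * v * (1 - e)‖ := CStarAlgebra.norm_le_norm_of_nonneg_of_le h4 h3
    _ ≤ 1 / ((n : ℝ)+1) := conj_efun_le hv n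

lemma exists_inv_lt {θ : ℝ} (hθ : 0 < θ) : ∃ n : ℕ, 1 / ((n : ℝ)+1) < θ := by
  obtain ⟨n, hn⟩ := exists_nat_gt (1/θ)
  refine ⟨n, ?_⟩
  rw [div_lt_iff₀ (by positivity)]
  rw [div_lt_iff₀ hθ] at hn
  nlinarith

lemma sq_lt_elim {a θ : ℝ} (ha : 0 ≤ a) (hθ : 0 < θ) (h : a ^ 2 < θ ^ 2) : a < θ := by
  nlinarith

lemma mem_genIdeal_mul_star (z : A) : z ∈ genIdeal (z * star z) := by
  rw [← (isClosed_genIdeal (z * star z)).closure_eq]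
  apply Metric.mem_closure_iff.mpr
  intro θ hθ
  obtain ⟨n, hn⟩ := exists_inv_lt (show (0:ℝ) < θ ^ 2 by positivity)
  refine ⟨cfc (efun n) (z * star z) * z,
    mul_mem_genIdeal_right _ (cfc_efun_mem (mul_star_self_nonneg z) n), ?_⟩
  rw [dist_eq_norm]
  have h := approx_conj (mul_star_self_nonneg z) (le_refl (z * star z)) n
  exact sq_lt_elim (norm_nonneg _) hθ (h.trans_lt hn)

lemma mem_genIdeal_star_mul (z : A) : z ∈ genIdeal (star z * z) := by
  rw [← (isClosed_genIdeal (star z * z)).closure_eq]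
  apply Metric.mem_closure_iff.mpr
  intro θ hθ
  obtain ⟨n, hn⟩ := exists_inv_lt (show (0:ℝ) < θ ^ 2 by positivity)
  refine ⟨z * cfc (efun n) (star z * z),
    mul_mem_genIdeal_left _ (cfc_efun_mem (star_mul_self_nonneg z) n), ?_⟩
  rw [dist_eq_norm]
  have h := approx_conj' (star_mul_self_nonneg z) (le_refl (star z * z)) n
  exact sq_lt_elim (norm_nonneg _) hθ (h.trans_lt hn)

lemma smul_mem_of_closed {J : TwoSidedIdeal A} (hJ : IsClosed ((J : Set A))) {z : A}
    (hz : z ∈ J) (r : ℝ) : r • z ∈ J := by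
  have key : (r • z : A) ∈ closure (J : Set A) := by
    apply Metric.mem_closure_iff.mpr
    intro θ hθ
    have hr1 : (0:ℝ) < |r| + 1 := by positivity
    obtain ⟨n, hn⟩ := exists_inv_lt (show (0:ℝ) < (θ/(|r|+1)) ^ 2 by positivity)
    refine ⟨(r • cfc (efun n) (z * star z)) * z, J.mul_mem_left _ _ hz, ?_⟩
    rw [dist_eq_norm, smul_mul_assoc, ← smul_sub, norm_smul, Real.norm_eq_abs]
    have h := approx_conj (mul_star_self_nonneg z) (le_refl (z * star z)) n
    have h2 : ‖z - cfc (efun n) (z * star z) * z‖ < θ/(|r|+1) :=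
      sq_lt_elim (norm_nonneg _) (by positivity) (h.trans_lt hn)
    calc |r| * ‖z - cfc (efun n) (z * star z) * z‖ ≤ (|r|+1) * ‖z - cfc (efun n) (z * star z) * z‖ := by
          have := norm_nonneg (z - cfc (efun n) (z * star z) * z); nlinarith [abs_nonneg r]
      _ < (|r|+1) * (θ/(|r|+1)) := by
          exact mul_lt_mul_of_pos_left h2 hr1
      _ = θ := by field_simp
  rwa [hJ.closure_eq] at key

lemma mem_genIdeal_of_nonneg_le {u v : A} (hu : 0 ≤ u) (huv : u ≤ v) : u ∈ genIdeal v := by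
  have hv : 0 ≤ v := hu.trans huv
  set s := cfc Real.sqrt u with hs
  have hssa : IsSelfAdjoint s := cfc_predicate _ u
  have hsq : s * s = u := by
    rw [hs, ← cfc_mul _ _ u Real.continuous_sqrt.continuousOn Real.continuous_sqrt.continuousOn]
    have : cfc (fun t : ℝ => Real.sqrt t * Real.sqrt t) u = cfc (fun t : ℝ => t) u :=
      cfc_congr fun t ht => Real.mul_self_sqrt (spectrum_nonneg_of_nonneg hu ht)
    rw [this, cfc_id' ℝ u]
  have hzz : s * star s ≤ v := by rw [hssa.star_eq, hsq]; exact huv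
  rw [← (isClosed_genIdeal v).closure_eq]
  apply Metric.mem_closure_iff.mpr
  intro θ hθ
  have hs1 : (0:ℝ) < ‖s‖ + 1 := by positivity
  obtain ⟨n, hn⟩ := exists_inv_lt (show (0:ℝ) < (θ/(‖s‖+1)) ^ 2 by positivity)
  refine ⟨cfc (efun n) v * u, mul_mem_genIdeal_right _ (cfc_efun_mem hv n), ?_⟩
  rw [dist_eq_norm]
  have hdiff : u - cfc (efun n) v * u = (s - cfc (efun n) v * s) * s := by
    rw [sub_mul, mul_assoc, hsq]
  have h := approx_conj hv hzz n
  have h2 : ‖s - cfc (efun n) v * s‖ < θ/(‖s‖+1) :=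
    sq_lt_elim (norm_nonneg _) (by positivity) (h.trans_lt hn)
  calc ‖u - cfc (efun n) v * u‖ = ‖(s - cfc (efun n) v * s) * s‖ := by rw [hdiff]
    _ ≤ ‖s - cfc (efun n) v * s‖ * ‖s‖ := norm_mul_le _ _
    _ ≤ ‖s - cfc (efun n) v * s‖ * (‖s‖ + 1) := by
        have := norm_nonneg (s - cfc (efun n) v * s); nlinarith [norm_nonneg s]
    _ < (θ/(‖s‖+1)) * (‖s‖ + 1) := by exact mul_lt_mul_of_pos_right h2 hs1
    _ = θ := by field_simp

lemma cfc_mem_genIdeal {v : A} (hv : 0 ≤ v) (f : ℝ → ℝ) (hf : Continuous f) (hf0 : f 0 = 0) :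
    cfc f v ∈ genIdeal v := by
  rw [← (isClosed_genIdeal v).closure_eq]
  apply Metric.mem_closure_iff.mpr
  intro θ hθ
  obtain ⟨δ, hδpos, hδ⟩ : ∃ δ > 0, ∀ t : ℝ, |t| < δ → |f t| < θ/2 := by
    obtain ⟨δ, hδpos, hδ⟩ := Metric.continuous_iff.mp hf 0 (θ/2) (by positivity)
    exact ⟨δ, hδpos, fun t ht => by
      simpa [Real.dist_eq, hf0] using hδ t (by simpa [Real.dist_eq] using ht)⟩
  set M := ‖cfc f v‖ with hM
  obtain ⟨n, hn⟩ := exists_nat_gt (M / (δ * (θ/2)))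
  refine ⟨cfc (efun n) v * cfc f v, mul_mem_genIdeal_right _ (cfc_efun_mem hv n), ?_⟩
  rw [dist_eq_norm]
  have hc1 : Continuous fun t : ℝ => 1 - efun n t := continuous_const.sub (efun_continuous n)
  have heq : cfc f v - cfc (efun n) v * cfc f v = cfc (fun t : ℝ => (1 - efun n t) * f t) v := by
    rw [cfc_mul _ _ v hc1.continuousOn hf.continuousOn,
      cfc_sub _ _ v (by fun_prop) (efun_continuous n).continuousOn, cfc_const 1 v, map_one]
    noncomm_ring
  rw [heq]
  have hM0 : 0 ≤ M := norm_nonneg _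
  refine lt_of_le_of_lt (norm_cfc_le (show (0:ℝ) ≤ θ/2 by positivity) ?_) (by linarith)
  intro t ht
  obtain ⟨ht0, _⟩ := spectrum_subset_Icc hv ht
  obtain ⟨hge, hle⟩ := one_sub_efun_mem (n := n) ht0
  have hft : |f t| ≤ M := norm_apply_le_norm_cfc f v ht hf.continuousOn
  rw [Real.norm_eq_abs, abs_mul, abs_of_nonneg hge]
  rcases lt_or_ge t δ with hcase | hcase
  · have : |f t| < θ/2 := hδ t (by rwa [abs_of_nonneg ht0])
    nlinarith [abs_nonneg (f t)]
  · have hd : (0:ℝ) < 1 + ((n:ℝ)+1) * t := by positivity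
    have h1 : 1 - efun n t ≤ 1 / (((n:ℝ)+1) * δ) := by
      rw [one_sub_efun ht0]
      apply div_le_div_of_nonneg_left (by norm_num) (by positivity)
      nlinarith [Nat.cast_nonneg (α := ℝ) n]
    have h2 : M / (δ * (θ/2)) < (n:ℝ)+1 := hn.trans (lt_add_one _)
    have h3 : M < ((n:ℝ)+1) * (δ * (θ/2)) := by
      rw [div_lt_iff₀ (by positivity)] at h2; linarith
    calc (1 - efun n t) * |f t| ≤ (1 / (((n:ℝ)+1) * δ)) * M := by
          apply mul_le_mul h1 hft (abs_nonneg _) (by positivity)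
      _ ≤ θ/2 := by
          rw [div_mul_eq_mul_div, div_le_iff₀ (by positivity)]
          nlinarith

end CStarApprox

section KeyLemma

open Polynomial Pointwise

variable [Nontrivial A]

lemma posCut_eq_cfc {ε : ℝ} (hε : 0 ≤ ε) (a : A) :
    posCut ε a = cfc (fun t : ℝ => max (t - ε) 0) a := by
  unfold posCut
  have h0 : max ((0:ℝ) - ε) 0 = 0 := max_eq_right (by linarith)
  exact cfcₙ_eq_cfc (by fun_prop) h0

lemma posCut_add_eq {ε : ℝ} (hε : 0 < ε) {m y : A} (hm : 0 ≤ m) (hy : 0 ≤ y)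
    (hmε : ‖m‖ ≤ ε) (hmy : m * y = ε • y) : posCut ε (m + y) = y := by
  have hsm : IsSelfAdjoint m := .of_nonneg hm
  have hsy : IsSelfAdjoint y := .of_nonneg hy
  have hc : 0 ≤ m + y := add_nonneg hm hy
  have hsc : IsSelfAdjoint (m + y) := hsm.add hsy
  set μ : A := algebraMap ℝ A ε with hμdef
  have hμ1 : μ = ε • (1 : A) := Algebra.algebraMap_eq_smul_one ε
  have hsμ : IsSelfAdjoint μ := by
    rw [hμ1]
    exact isSelfAdjoint_iff.mpr (by rw [star_smul, star_trivial, star_one])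
  set u : A := μ + y with hudef
  have hsu : IsSelfAdjoint u := hsμ.add hsy
  have hμl : ∀ z : A, μ * z = ε • z := fun z => by rw [hμ1, smul_mul_assoc, one_mul]
  have hym : y * m = ε • y := by
    have h := congrArg star hmy
    simp only [star_mul, star_smul, hsm.star_eq, hsy.star_eq, star_trivial] at h
    exact h
  -- key algebraic identities
  have hmu_aux : (m - μ) * u = ε • (m - μ) := by
    rw [hudef, mul_add, sub_mul, sub_mul, hmy, hμl y, hμl μ, smul_sub]
    rw [hμ1]
    rw [mul_smul_comm, mul_one]
    abel
  have hpow : ∀ k : ℕ, (m - μ) * u ^ k = ε ^ k • (m - μ) := by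
    intro k
    induction k with
    | zero => simp
    | succ k ih =>
      rw [pow_succ, ← mul_assoc, ih, smul_mul_assoc, hmu_aux, smul_smul, pow_succ]
  have hym_pow : ∀ k : ℕ, y * m ^ k = ε ^ k • y := by
    intro k
    induction k with
    | zero => simp
    | succ k ih =>
      rw [pow_succ, ← mul_assoc, ih, smul_mul_assoc, hym, smul_smul, pow_succ]
  have hXk : ∀ k : ℕ, (m + y) ^ k = m ^ k + u ^ k - ε ^ k • 1 := by
    intro k
    induction k with
    | zero => simp
    | succ k ih =>
      have e1 : m * u ^ k = ε ^ k • m - ε ^ k • μ + ε • u ^ k := by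
        have h := hpow k
        rw [sub_mul] at h
        have h2 : m * u ^ k = ε ^ k • (m - μ) + μ * u ^ k := by
          rw [← h]; abel
        rw [h2, hμl (u ^ k), smul_sub]
      have e2 : y * u ^ k = u ^ (k+1) - ε • u ^ k := by
        have : y = u - μ := by rw [hudef]; abel
        rw [this, sub_mul, hμl (u ^ k), pow_succ']
      calc (m + y) ^ (k+1) = (m + y) * (m + y) ^ k := (pow_succ' _ _)
        _ = (m + y) * (m ^ k + u ^ k - ε ^ k • 1) := by rw [ih]
        _ = m * m ^ k + m * u ^ k + (y * m ^ k) + y * u ^ k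
            - ε ^ k • m - ε ^ k • y := by
          simp only [mul_add, add_mul, mul_sub, mul_smul_comm, mul_one, smul_add]
          abel
        _ = m ^ (k+1) + u ^ (k+1) - ε ^ (k+1) • 1 := by
          rw [e1, e2, hym_pow k, ← pow_succ' m k, hμ1, smul_smul, ← pow_succ]
          abel
  have haev : ∀ P : ℝ[X], aeval (m + y) P - aeval m P
      = aeval u P - algebraMap ℝ A (P.eval ε) := by
    intro P
    induction P using Polynomial.induction_on with
    | C r => simp
    | add p q hp hq =>
      simp only [map_add, eval_add]
      calc aeval (m+y) p + aeval (m+y) q - (aeval m p + aeval m q)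
          = (aeval (m+y) p - aeval m p) + (aeval (m+y) q - aeval m q) := by abel
        _ = (aeval u p - algebraMap ℝ A (p.eval ε))
            + (aeval u q - algebraMap ℝ A (q.eval ε)) := by rw [hp, hq]
        _ = aeval u p + aeval u q
            - (algebraMap ℝ A (p.eval ε) + algebraMap ℝ A (q.eval ε)) := by abel
    | monomial n r _ =>
      simp only [map_mul, aeval_C, map_pow, aeval_X, eval_mul, eval_C, eval_pow, eval_X]
      rw [hXk (n+1)]
      have hμpow : ((algebraMap ℝ A) ε) ^ (n+1) = ε ^ (n+1) • (1:A) := by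
        rw [← map_pow, Algebra.algebraMap_eq_smul_one]
      rw [hμpow, mul_sub, mul_add]
      abel
  -- spectra
  set g : ℝ → ℝ := fun t : ℝ => max (t - ε) 0 with hg
  have hgcont : Continuous g := by fun_prop
  set R : ℝ := ‖m‖ + ‖y‖ + ε + 1 with hR
  have hR0 : 0 < R := by positivity
  have hspecC : spectrum ℝ (m + y) ⊆ Set.Icc 0 R := by
    refine (spectrum_subset_Icc hc).trans ?_
    apply Set.Icc_subset_Icc_right
    calc ‖m + y‖ ≤ ‖m‖ + ‖y‖ := norm_add_le _ _
      _ ≤ R := by rw [hR]; linarith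
  have hspecm : spectrum ℝ m ⊆ Set.Icc 0 ε := by
    refine (spectrum_subset_Icc hm).trans ?_
    exact Set.Icc_subset_Icc_right hmε
  have hspecu : spectrum ℝ u ⊆ Set.Icc ε R := by
    intro t ht
    have hset : ({ε} : Set ℝ) + spectrum ℝ y = spectrum ℝ u := spectrum.singleton_add_eq y ε
    rw [← hset] at ht
    obtain ⟨e', he', s, hs, rfl⟩ := Set.mem_add.mp ht
    rw [Set.mem_singleton_iff] at he'
    subst he'
    obtain ⟨hs0, hs1⟩ := spectrum_subset_Icc hy hs
    constructor
    · linarith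
    · have := norm_nonneg m; rw [hR]; linarith
  -- final estimate
  have hεR : ε ≤ R := by
    have := norm_nonneg m; have := norm_nonneg y; rw [hR]; linarith
  have key : ∀ θ : ℝ, 0 < θ → ‖cfc g (m + y) - y‖ ≤ θ := by
    intro θ hθ
    obtain ⟨P, hP⟩ := exists_polynomial_near_of_continuousOn 0 R g
      hgcont.continuousOn (θ/4) (by positivity)
    have hP' : ∀ t ∈ Set.Icc (0:ℝ) R, |P.eval t - g t| ≤ θ/4 := fun t ht => (hP t ht).le
    have h' : aeval (m + y) P = aeval m P + (aeval u P - algebraMap ℝ A (P.eval ε)) := by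
      have := haev P
      rw [sub_eq_iff_eq_add] at this
      rw [this]; abel
    have decomp : cfc g (m + y) - y
        = (cfc g (m + y) - cfc (fun t => P.eval t) (m + y)) + aeval m P
          + (aeval u P - algebraMap ℝ A (P.eval ε) - y) := by
      rw [cfc_polynomial P (m + y) hsc, h']; abel
    have B1 : ‖cfc g (m + y) - cfc (fun t => P.eval t) (m + y)‖ ≤ θ/4 := by
      rw [← cfc_sub g (fun t => P.eval t) (m + y) hgcont.continuousOn (by fun_prop)]
      apply norm_cfc_le (by positivity)
      intro t ht
      rw [Real.norm_eq_abs, abs_sub_comm]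
      exact hP' t (hspecC ht)
    have B2 : ‖(aeval m P : A)‖ ≤ θ/4 := by
      rw [← cfc_polynomial P m hsm]
      apply norm_cfc_le (by positivity)
      intro t ht
      obtain ⟨ht0, htε⟩ := hspecm ht
      have hgt : g t = 0 := by rw [hg]; simp only; rw [max_eq_right (by linarith)]
      have := hP' t ⟨ht0, by linarith⟩
      rw [hgt] at this
      rw [Real.norm_eq_abs]
      simpa using this
    have B3 : ‖aeval u P - algebraMap ℝ A (P.eval ε) - y‖ ≤ θ/2 := by
      have hcfc3 : aeval u P - algebraMap ℝ A (P.eval ε) - y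
          = cfc (fun t : ℝ => P.eval t - P.eval ε - (t - ε)) u := by
        rw [cfc_sub (fun t : ℝ => P.eval t - P.eval ε) (fun t : ℝ => t - ε) u (by fun_prop) (by fun_prop),
          cfc_sub (fun t : ℝ => P.eval t) (fun _ : ℝ => P.eval ε) u (by fun_prop) (by fun_prop),
          cfc_sub (fun t : ℝ => t) (fun _ : ℝ => ε) u (by fun_prop) (by fun_prop),
          cfc_const (P.eval ε) u hsu, cfc_const ε u hsu, cfc_id' ℝ u hsu,
          cfc_polynomial P u hsu]
        have : u - algebraMap ℝ A ε = y := by rw [hudef]; abel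
        rw [this]
      rw [hcfc3]
      apply norm_cfc_le (by positivity)
      intro t ht
      obtain ⟨htε, htR⟩ := hspecu ht
      have hgt : g t = t - ε := by rw [hg]; simp only; rw [max_eq_left (by linarith)]
      have hgε : g ε = 0 := by rw [hg]; simp
      have h1 := hP' t ⟨by linarith, htR⟩
      have h2 := hP' ε ⟨le_of_lt hε, hεR⟩
      rw [hgε] at h2
      rw [Real.norm_eq_abs]
      have : P.eval t - P.eval ε - (t - ε) = (P.eval t - g t) - (P.eval ε - 0) := by
        rw [hgt]; ring
      rw [this]
      calc |(P.eval t - g t) - (P.eval ε - 0)| ≤ |P.eval t - g t| + |P.eval ε - 0| :=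
            abs_sub _ _
        _ ≤ θ/4 + θ/4 := add_le_add h1 (by simpa using h2)
        _ = θ/2 := by ring
    calc ‖cfc g (m + y) - y‖ ≤ ‖cfc g (m + y) - cfc (fun t => P.eval t) (m + y)‖
          + ‖(aeval m P : A)‖ + ‖aeval u P - algebraMap ℝ A (P.eval ε) - y‖ := by
          rw [decomp]
          exact (norm_add_le _ _).trans (by gcongr; exact norm_add_le _ _)
      _ ≤ θ/4 + θ/4 + θ/2 := by gcongr
      _ = θ := by ring
  have hzero : cfc g (m + y) - y = 0 := by
    rw [← norm_le_zero_iff]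
    refine le_of_forall_pos_le_add ?_
    intro θ hθ
    simpa using key θ hθ
  rw [posCut_eq_cfc hε.le, ← hg, sub_eq_zero.mp hzero]

end KeyLemma

section Generator

variable [Nontrivial A]

/-- The closure of the union of a directed family of two-sided ideals, as a two-sided ideal. -/
def dirSupIdeal {ι : Type*} (J : ι → TwoSidedIdeal A) (hne : Nonempty ι)
    (hdir : Directed (· ≤ ·) J) : TwoSidedIdeal A :=
  TwoSidedIdeal.mk' (closure (⋃ i, (J i : Set A)))
    (subset_closure (Set.mem_iUnion.mpr ⟨hne.some, (J hne.some).zero_mem⟩))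
    (fun hx hy => map_mem_closure₂ continuous_add hx hy fun a ha b hb => by
      obtain ⟨i, hi⟩ := Set.mem_iUnion.mp ha
      obtain ⟨j, hj⟩ := Set.mem_iUnion.mp hb
      obtain ⟨k, hik, hjk⟩ := hdir i j
      exact Set.mem_iUnion.mpr ⟨k, (J k).add_mem (hik hi) (hjk hj)⟩)
    (fun hx => map_mem_closure continuous_neg hx fun a ha => by
      obtain ⟨i, hi⟩ := Set.mem_iUnion.mp ha
      exact Set.mem_iUnion.mpr ⟨i, (J i).neg_mem hi⟩)
    (fun {x y} hy => map_mem_closure (f := (x * ·)) (continuous_mul_left x) hy fun a ha => by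
      obtain ⟨i, hi⟩ := Set.mem_iUnion.mp ha
      exact Set.mem_iUnion.mpr ⟨i, (J i).mul_mem_left _ _ hi⟩)
    (fun {x y} hx => map_mem_closure (f := (· * y)) (continuous_mul_right y) hx fun a ha => by
      obtain ⟨i, hi⟩ := Set.mem_iUnion.mp ha
      exact Set.mem_iUnion.mpr ⟨i, (J i).mul_mem_right _ _ hi⟩)

lemma coe_dirSupIdeal {ι : Type*} (J : ι → TwoSidedIdeal A) (hne : Nonempty ι)
    (hdir : Directed (· ≤ ·) J) :
    (dirSupIdeal J hne hdir : Set A) = closure (⋃ i, (J i : Set A)) :=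
  TwoSidedIdeal.coe_mk' _ _ _ _ _ _

lemma cfc_sqrt_mul_self {p : A} (hp : 0 ≤ p) : cfc Real.sqrt p * cfc Real.sqrt p = p := by
  rw [← cfc_mul _ _ p Real.continuous_sqrt.continuousOn Real.continuous_sqrt.continuousOn]
  have h : cfc (fun t : ℝ => Real.sqrt t * Real.sqrt t) p = cfc (fun t : ℝ => t) p :=
    cfc_congr fun t ht => Real.mul_self_sqrt (spectrum_nonneg_of_nonneg hp ht)
  rw [h, cfc_id' ℝ p]

/-- From a compact closed ideal inside `genIdeal x`, extract a positive generator of the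
form `x * w * x`. -/
lemma exists_generator {x : A} (hx : 0 ≤ x) (Jμ : TwoSidedIdeal A)
    (hJc : IsClosed ((Jμ : Set A))) (hcpt : IsCptIdeal ((Jμ : Set A)))
    (hle : (Jμ : Set A) ⊆ genIdeal x) :
    ∃ w : A, 0 ≤ x * w * x ∧ x * w * x ∈ (Jμ : Set A) ∧
      genIdeal (x * w * x) = (Jμ : Set A) := by
  have hxsa : IsSelfAdjoint x := .of_nonneg hx
  -- the directed family of ideals generated by `x * w * x`, `w` positive in `Jμ`
  set ι₀ : Type u := {w : A // w ∈ Jμ ∧ 0 ≤ w} with hι₀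
  set fam : ι₀ → TwoSidedIdeal A := fun w => genIdeal' (x * w.1 * x) with hfam
  have hfam_coe : ∀ w : ι₀, (fam w : Set A) = genIdeal (x * w.1 * x) := fun w => coe_genIdeal' _
  have hne : Nonempty ι₀ := ⟨⟨0, Jμ.zero_mem, le_refl 0⟩⟩
  have hconj_nonneg : ∀ w : A, 0 ≤ w → 0 ≤ x * w * x := fun w hw => by
    have := star_left_conjugate_nonneg hw x
    rwa [hxsa.star_eq] at this
  have hconj_mem : ∀ w : A, w ∈ Jμ → x * w * x ∈ Jμ := fun w hw =>
    Jμ.mul_mem_right _ _ (Jμ.mul_mem_left _ _ hw)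
  have hdir : Directed (· ≤ ·) fam := by
    intro w w'
    refine ⟨⟨w.1 + w'.1, Jμ.add_mem w.2.1 w'.2.1, add_nonneg w.2.2 w'.2.2⟩, ?_, ?_⟩
    · show fam w ≤ fam _
      rw [← SetLike.coe_subset_coe, hfam_coe, hfam_coe]
      apply genIdeal_mono
      exact mem_genIdeal_of_nonneg_le (hconj_nonneg _ w.2.2)
        (by rw [mul_add, add_mul]; exact le_add_of_nonneg_right (hconj_nonneg _ w'.2.2))
    · show fam w' ≤ fam _
      rw [← SetLike.coe_subset_coe, hfam_coe, hfam_coe]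
      apply genIdeal_mono
      exact mem_genIdeal_of_nonneg_le (hconj_nonneg _ w'.2.2)
        (by rw [mul_add, add_mul]; exact le_add_of_nonneg_left (hconj_nonneg _ w.2.2))
  set K : TwoSidedIdeal A := dirSupIdeal fam hne hdir with hK
  have hKcoe : (K : Set A) = closure (⋃ i, (fam i : Set A)) := coe_dirSupIdeal _ _ _
  have hKclosed : IsClosed (K : Set A) := by rw [hKcoe]; exact isClosed_closure
  -- x-multiples of Jμ land in K
  have hxK : ∀ c, c ∈ Jμ → c * x ∈ K := by
    intro c hc
    have hz : c * x ∈ genIdeal (star (c * x) * (c * x)) := mem_genIdeal_star_mul _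
    have hzz : star (c * x) * (c * x) = x * (star c * c) * x := by
      rw [star_mul, hxsa.star_eq]
      noncomm_ring
    rw [hzz] at hz
    have hidx : (⟨star c * c, Jμ.mul_mem_left _ _ hc, star_mul_self_nonneg c⟩ : ι₀) ∈
        Set.univ := Set.mem_univ _
    have hsub : genIdeal (x * (star c * c) * x) ⊆ (K : Set A) := by
      rw [hKcoe]
      refine Set.Subset.trans ?_ subset_closure
      refine Set.Subset.trans ?_
        (Set.subset_iUnion (fun i : ι₀ => (fam i : Set A))
          ⟨star c * c, Jμ.mul_mem_left _ _ hc, star_mul_self_nonneg c⟩)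
      rw [hfam_coe]
    exact hsub hz
  -- the transporter ideal
  set T : TwoSidedIdeal A := TwoSidedIdeal.mk' {v : A | ∀ c ∈ Jμ, c * v ∈ K}
    (fun c _ => by rw [mul_zero]; exact K.zero_mem)
    (fun {v v'} hv hv' c hc => by rw [mul_add]; exact K.add_mem (hv c hc) (hv' c hc))
    (fun {v} hv c hc => by rw [mul_neg]; exact K.neg_mem (hv c hc))
    (fun {v v'} hv' c hc => by rw [← mul_assoc]; exact hv' _ (Jμ.mul_mem_right _ _ hc))
    (fun {v v'} hv c hc => by rw [← mul_assoc]; exact K.mul_mem_right _ _ (hv c hc)) with hT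
  have hxT : x ∈ T := by
    rw [hT, TwoSidedIdeal.mem_mk']
    exact fun c hc => hxK c hc
  have hspanT : ∀ v ∈ (TwoSidedIdeal.span {x} : TwoSidedIdeal A), v ∈ T := fun v hv =>
    TwoSidedIdeal.mem_span_iff.mp hv T (by simpa using hxT)
  -- every positive element of Jμ lies in K
  have hposK : ∀ p, p ∈ Jμ → 0 ≤ p → p ∈ K := by
    intro p hp hppos
    set s := cfc Real.sqrt p with hs
    have hsmem : s ∈ genIdeal p :=
      cfc_mem_genIdeal hppos Real.sqrt Real.continuous_sqrt Real.sqrt_zero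
    have hsJ : s ∈ Jμ := SetLike.mem_coe.mp (genIdeal_subset hJc hp hsmem)
    have hsx : s ∈ genIdeal x := genIdeal_mono (hle (SetLike.mem_coe.mpr hp)) hsmem
    have hclosureK : p ∈ closure (K : Set A) := by
      apply Metric.mem_closure_iff.mpr
      intro θ hθ
      have hden : (0:ℝ) < ‖s‖ + 1 := by positivity
      obtain ⟨w, hwmem, hwdist⟩ := Metric.mem_closure_iff.mp hsx (θ / (‖s‖ + 1))
        (by positivity)
      have hwT : ∀ c ∈ Jμ, c * w ∈ K := by
        have h := hspanT w hwmem
        rw [hT, TwoSidedIdeal.mem_mk'] at h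
        exact h
      refine ⟨s * w, SetLike.mem_coe.mpr (hwT s hsJ), ?_⟩
      rw [dist_eq_norm] at hwdist ⊢
      have h1 : p - s * w = s * (s - w) := by
        rw [mul_sub, cfc_sqrt_mul_self hppos]
      rw [h1]
      calc ‖s * (s - w)‖ ≤ ‖s‖ * ‖s - w‖ := norm_mul_le _ _
        _ ≤ (‖s‖ + 1) * ‖s - w‖ := by
            have := norm_nonneg (s - w); nlinarith [norm_nonneg s]
        _ < (‖s‖ + 1) * (θ / (‖s‖ + 1)) := by
            exact mul_lt_mul_of_pos_left hwdist hden
        _ = θ := by field_simp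
    rwa [hKclosed.closure_eq] at hclosureK
  -- Jμ is covered by K
  have hcover : (Jμ : Set A) ⊆ closure (⋃ i, (fam i : Set A)) := by
    intro z hz
    rw [← hKcoe]
    have hzzK : z * star z ∈ K :=
      hposK _ (Jμ.mul_mem_right _ _ hz) (mul_star_self_nonneg z)
    exact genIdeal_subset hKclosed hzzK (mem_genIdeal_mul_star z)
  -- apply compactness
  obtain ⟨w₀, hw₀⟩ := hcpt ι₀ fam hne
    (fun i => by rw [hfam_coe]; exact isClosed_genIdeal _) hdir hcover
  rw [hfam_coe] at hw₀
  refine ⟨w₀.1, hconj_nonneg _ w₀.2.2, hconj_mem _ w₀.2.1, ?_⟩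
  apply Set.Subset.antisymm
  · exact genIdeal_subset hJc (hconj_mem _ w₀.2.1)
  · exact hw₀

end Generator

end Aux

set_option maxHeartbeats 1000000 in
/-- Suppose the primitive ideal space of `A` has a basis of compact open sets; in terms of
the ideal lattice of `A`: every closed two-sided ideal is the closed union of the compact
closed two-sided ideals contained in it.  Then for each `ε > 0` the set of positive elements
`c` such that the closed ideal generated by `(c-ε)₊` is compact is dense in `A₊`. -/
theorem stmt17
    (hbasis : ∀ I : TwoSidedIdeal A, IsClosed ((I : Set A)) →
      (I : Set A) ⊆ closure (⋃ J : {J : TwoSidedIdeal A //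
        IsClosed ((J : Set A)) ∧ IsCptIdeal ((J : Set A)) ∧ J ≤ I},
          ((J : TwoSidedIdeal A) : Set A)))
    (ε : ℝ) (hε : 0 < ε) (a : A) (ha : 0 ≤ a) (δ : ℝ) (hδ : 0 < δ) :
    ∃ c : A, 0 ≤ c ∧ ‖c - a‖ < δ ∧ IsCptIdeal (genIdeal (posCut ε c)) := by
  rcases subsingleton_or_nontrivial A with hsub | hnt
  · refine ⟨a, ha, by simpa using hδ, ?_⟩
    intro ι J hne hcl hdir hcov
    obtain ⟨i⟩ := hne
    exact ⟨i, fun s _ => by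
      rw [Subsingleton.elim s 0]; exact SetLike.mem_coe.mpr (J i).zero_mem⟩
  · set g₀ : ℝ → ℝ := fun t => max (t - ε) 0 with hg₀
    have hg₀c : Continuous g₀ := by fun_prop
    set x : A := posCut ε a with hxdef
    have hxcfc : x = cfc g₀ a := posCut_eq_cfc hε.le a
    have haspec : ∀ t ∈ spectrum ℝ a, 0 ≤ t := fun t ht => spectrum_nonneg_of_nonneg ha ht
    have hx0 : 0 ≤ x := by rw [hxcfc]; exact cfc_nonneg fun t _ => le_max_right _ _
    have hasa : IsSelfAdjoint a := .of_nonneg ha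
    set m : A := cfc (fun t : ℝ => min t ε) a with hmdef
    have hm0 : 0 ≤ m := cfc_nonneg fun t ht => le_min (haspec t ht) hε.le
    have hmnorm : ‖m‖ ≤ ε := norm_cfc_le hε.le fun t ht => by
      rw [Real.norm_eq_abs, abs_of_nonneg (le_min (haspec t ht) hε.le)]
      exact min_le_right _ _
    have hg₀eq : ∀ t : ℝ, t ≤ ε → g₀ t = 0 := fun t h => by
      rw [hg₀]; exact max_eq_right (by linarith)
    have hsplit : ∀ t : ℝ, min t ε + g₀ t = t := by
      intro t
      rcases le_total t ε with h | h
      · rw [hg₀eq t h, min_eq_left h]; ring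
      · rw [hg₀, min_eq_right h]
        simp only
        rw [max_eq_left (by linarith)]; ring
    have hma : m + x = a := by
      rw [hmdef, hxcfc, ← cfc_add a _ _ (by fun_prop) hg₀c.continuousOn]
      calc cfc (fun t : ℝ => min t ε + g₀ t) a = cfc (fun t : ℝ => t) a :=
            cfc_congr fun t _ => hsplit t
        _ = a := cfc_id' ℝ a
    set h₄ : ℝ → ℝ := fun s => Real.sqrt (Real.sqrt s) with hh₄
    have hh₄c : Continuous h₄ := Real.continuous_sqrt.comp Real.continuous_sqrt
    set x' : A := cfc (fun t : ℝ => h₄ (g₀ t)) a with hx'def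
    have hx'0 : 0 ≤ x' := cfc_nonneg fun t _ => Real.sqrt_nonneg _
    have hx'sa : IsSelfAdjoint x' := .of_nonneg hx'0
    have hcomp1 : Continuous fun t : ℝ => h₄ (g₀ t) := hh₄c.comp hg₀c
    have hcomp2 : Continuous fun t : ℝ => Real.sqrt (g₀ t) := Real.continuous_sqrt.comp hg₀c
    have hsq2 : x' * x' = cfc (fun t : ℝ => Real.sqrt (g₀ t)) a := by
      rw [hx'def, ← cfc_mul _ _ a hcomp1.continuousOn hcomp1.continuousOn]
      exact cfc_congr fun t _ => Real.mul_self_sqrt (Real.sqrt_nonneg _)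
    have hx4 : x' * x' * (x' * x') = x := by
      rw [hsq2, hxcfc,
        ← cfc_mul _ _ a hcomp2.continuousOn hcomp2.continuousOn]
      exact cfc_congr fun t _ => Real.mul_self_sqrt (le_max_right _ _)
    have hmx' : m * x' = ε • x' := by
      rw [hmdef, hx'def, ← cfc_mul _ _ a (by fun_prop) hcomp1.continuousOn]
      have heq : cfc (fun t : ℝ => min t ε * h₄ (g₀ t)) a
          = cfc (fun t : ℝ => ε * h₄ (g₀ t)) a := by
        apply cfc_congr
        intro t _
        show (min t ε) * h₄ (g₀ t) = ε * h₄ (g₀ t)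
        rcases le_total t ε with h | h
        · rw [hg₀eq t h, hh₄]
          simp [Real.sqrt_zero]
        · rw [min_eq_right h]
      rw [heq, cfc_const_mul ε _ a hcomp1.continuousOn]
    have hmx : m * x = ε • x := by
      rw [hmdef, hxcfc, ← cfc_mul _ _ a (by fun_prop) hg₀c.continuousOn]
      have heq : cfc (fun t : ℝ => min t ε * g₀ t) a = cfc (fun t : ℝ => ε * g₀ t) a := by
        apply cfc_congr
        intro t _
        show (min t ε) * g₀ t = ε * g₀ t
        rcases le_total t ε with h | h
        · rw [hg₀eq t h]; ring
        · rw [min_eq_right h]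
      rw [heq, cfc_const_mul ε _ a hg₀c.continuousOn]
    -- apply the basis hypothesis to the ideal generated by x
    have hIc : IsClosed ((genIdeal' x : Set A)) := by
      rw [coe_genIdeal']; exact isClosed_genIdeal x
    have hx'I : x' ∈ ((genIdeal' x : Set A)) := by
      rw [coe_genIdeal']
      have hcomp : x' = cfc h₄ x := by
        rw [hx'def, hxcfc, ← cfc_comp' h₄ g₀ a hh₄c.continuousOn hg₀c.continuousOn]
      rw [hcomp]
      refine cfc_mem_genIdeal hx0 h₄ hh₄c ?_
      rw [hh₄]; simp [Real.sqrt_zero]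
    have hx'cl := hbasis (genIdeal' x) hIc hx'I
    set B := ‖x'‖ with hB
    have hBnn : 0 ≤ B := norm_nonneg _
    set η := δ/3 with hη
    have hηpos : 0 < η := by positivity
    set θ := min 1 (η / (B^2*(2*B+1) + 1)) with hθ
    have hθpos : 0 < θ := lt_min one_pos (by positivity)
    have hθ1 : θ ≤ 1 := min_le_left _ _
    have hθ2 : θ ≤ η / (B^2*(2*B+1) + 1) := min_le_right _ _
    obtain ⟨d, hdU, hddist⟩ := Metric.mem_closure_iff.mp hx'cl θ hθpos
    obtain ⟨Jset, hdJ⟩ := Set.mem_iUnion.mp hdU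
    obtain ⟨hJclosed, hJcpt, hJleI⟩ := Jset.2
    have hJle' : ((Jset.1 : TwoSidedIdeal A) : Set A) ⊆ genIdeal x := by
      have h := SetLike.coe_subset_coe.mpr hJleI
      rwa [coe_genIdeal'] at h
    set q : A := x' * (d * star d) * x' with hq
    have hq0 : 0 ≤ q := by
      have h := mul_star_self_nonneg (x' * d)
      have heq : (x' * d) * star (x' * d) = q := by
        rw [star_mul, hx'sa.star_eq, hq]; noncomm_ring
      rwa [heq] at h
    have hdmem : d ∈ Jset.1 := SetLike.mem_coe.mp hdJ
    have hqJ : q ∈ Jset.1 :=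
      Jset.1.mul_mem_right _ _ (Jset.1.mul_mem_left _ _ (Jset.1.mul_mem_right _ _ hdmem))
    have hmq : m * q = ε • q := by
      have h1 : m * q = ((m * x') * (d * star d)) * x' := by rw [hq]; noncomm_ring
      rw [h1, hmx', smul_mul_assoc, smul_mul_assoc, hq]
    have hdist' : ‖x' - d‖ < θ := by rwa [dist_eq_norm] at hddist
    have hdn : ‖d‖ ≤ B + θ := by
      calc ‖d‖ = ‖x' - (x' - d)‖ := by rw [sub_sub_cancel]
        _ ≤ ‖x'‖ + ‖x' - d‖ := norm_sub_le _ _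
        _ ≤ B + θ := by rw [hB]; linarith
    have hqx : ‖q - x‖ < η := by
      have hDX : ‖d * star d - x' * x'‖ ≤ θ*(2*B+1) := by
        have hsplit2 : d * star d - x' * x' = d * star (d - x') + (d - x') * x' := by
          rw [star_sub, hx'sa.star_eq]; noncomm_ring
        have hdx' : ‖d - x'‖ < θ := by rwa [norm_sub_rev] at hdist'
        calc ‖d * star d - x' * x'‖
            ≤ ‖d * star (d - x')‖ + ‖(d - x') * x'‖ := by rw [hsplit2]; exact norm_add_le _ _
          _ ≤ ‖d‖ * ‖star (d - x')‖ + ‖d - x'‖ * ‖x'‖ :=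
              add_le_add (norm_mul_le _ _) (norm_mul_le _ _)
          _ = ‖d‖ * ‖d - x'‖ + ‖d - x'‖ * B := by rw [norm_star, hB]
          _ ≤ θ*(2*B+1) := by nlinarith [norm_nonneg (d - x'), norm_nonneg d]
      have hqx2 : q - x = (x' * (d * star d - x' * x')) * x' := by
        rw [hq, ← hx4]; noncomm_ring
      calc ‖q - x‖ = ‖(x' * (d * star d - x' * x')) * x'‖ := by rw [hqx2]
        _ ≤ ‖x' * (d * star d - x' * x')‖ * ‖x'‖ := norm_mul_le _ _
        _ ≤ ‖x'‖ * ‖d * star d - x' * x'‖ * ‖x'‖ := by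
            have := norm_mul_le x' (d * star d - x' * x')
            have h0 := norm_nonneg x'
            nlinarith [norm_nonneg (d * star d - x' * x')]
        _ ≤ B * (θ*(2*B+1)) * B := by
            rw [hB]
            nlinarith [norm_nonneg x', norm_nonneg (d * star d - x' * x'), hθpos.le]
        _ < η := by
            have hpos : (0:ℝ) < B^2*(2*B+1) + 1 := by positivity
            rw [le_div_iff₀ hpos] at hθ2
            nlinarith
    obtain ⟨w₀, hgpos, hgJ, hgIdeal⟩ := exists_generator hx0 Jset.1 hJclosed hJcpt hJle'
    have hmg : m * (x * w₀ * x) = ε • (x * w₀ * x) := by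
      have h1 : m * (x * w₀ * x) = ((m * x) * w₀) * x := by noncomm_ring
      rw [h1, hmx, smul_mul_assoc, smul_mul_assoc]
    set τ := η / (‖x * w₀ * x‖ + 1) with hτ
    have hτpos : 0 < τ := by positivity
    set y := q + τ • (x * w₀ * x) with hy
    have hy0 : 0 ≤ y := add_nonneg hq0 (smul_nonneg hτpos.le hgpos)
    have hmy : m * y = ε • y := by
      rw [hy, mul_add, hmq, mul_smul_comm, hmg, smul_comm τ ε (x * w₀ * x), ← smul_add]
    have hyJ : y ∈ Jset.1 :=
      Jset.1.add_mem hqJ (smul_mem_of_closed hJclosed (SetLike.mem_coe.mp hgJ) τ)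
    have hgen : genIdeal y = ((Jset.1 : TwoSidedIdeal A) : Set A) := by
      apply Set.Subset.antisymm
      · exact genIdeal_subset hJclosed hyJ
      · rw [← hgIdeal]
        apply genIdeal_mono
        have hτg : τ • (x * w₀ * x) ∈ genIdeal y :=
          mem_genIdeal_of_nonneg_le (smul_nonneg hτpos.le hgpos)
            (by rw [hy]; exact le_add_of_nonneg_left hq0)
        have h := smul_mem_of_closed (J := genIdeal' y)
          (by rw [coe_genIdeal']; exact isClosed_genIdeal y)
          (mem_genIdeal'_iff.mpr hτg) τ⁻¹
        rw [mem_genIdeal'_iff, smul_smul, inv_mul_cancel₀ hτpos.ne', one_smul] at h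
        exact h
    refine ⟨m + y, add_nonneg hm0 hy0, ?_, ?_⟩
    · have hrw : m + y - a = y - x := by rw [← hma]; abel
      rw [hrw]
      have h1 : ‖y - x‖ ≤ ‖q - x‖ + τ * ‖x * w₀ * x‖ := by
        have hrw2 : y - x = (q - x) + τ • (x * w₀ * x) := by rw [hy]; abel
        rw [hrw2]
        refine (norm_add_le _ _).trans ?_
        rw [norm_smul, Real.norm_eq_abs, abs_of_pos hτpos]
      have h2 : τ * ‖x * w₀ * x‖ < η := by
        rw [hτ, div_mul_eq_mul_div, div_lt_iff₀ (by positivity)]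
        nlinarith [norm_nonneg (x * w₀ * x)]
      have h3 : ‖y - x‖ < 2*η := by linarith
      rw [hη] at h3
      linarith
    · have hpc : posCut ε (m + y) = y := posCut_add_eq hε hm0 hy0 hmnorm hmy
      rw [hpc, hgen]
      exact hJcpt
end
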